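/- For every w ∈ 𝔻, the function q_w(z) = (1-z)^{w/(1-w)} is an eigenvector of the adjoint Cesàro operator C* with eigenvalue 1-w, i.e., C* q_w = (1-w) q_w, where (C*f)(z) = (1/(1-z)) ∫_z^1 f(ξ) dξ. -/

import Mathlib

open Complex Metric

/-
Substituting `ξ = z + t(1 - z)` gives `1 - ξ = (1 - z)(1 - t)` with `1 - t ≥ 0`, and a
nonnegative real factor splits off a principal power. Hence for `Re a > -1`,
`C*((1 - ·)^a) = (1 - z)^a ∫₀¹ s^a ds = (1 - z)^a / (a + 1)`. For `a = w/(1 - w)` one has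
`a + 1 = 1/(1 - w)`, whose real part is positive when `|w| < 1`.
-/

/-- The adjoint Cesàro operator, via
`(C*f)(z) = (1/(1-z)) ∫_z^1 f(ξ) dξ = ∫₀¹ f(z + t(1-z)) dt`
(integration along the segment from `z` to `1`). -/
noncomputable def cesaroStar (f : ℂ → ℂ) (z : ℂ) : ℂ :=
  ∫ t in (0:ℝ)..1, f (z + (t : ℂ) * (1 - z))

namespace Complex

theorem mul_ofReal_cpow_of_nonneg (x : ℂ) {r : ℝ} (hr : 0 ≤ r) (a : ℂ) :
    (x * r) ^ a = x ^ a * (r : ℂ) ^ a := by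
  rcases eq_or_ne a 0 with rfl | ha
  · simp
  obtain rfl | hx := eq_or_ne x 0
  · simp [zero_cpow ha]
  obtain rfl | hr := hr.eq_or_lt
  · simp [zero_cpow ha]
  have hr0 : (r : ℂ) ≠ 0 := ofReal_ne_zero.mpr hr.ne'
  rw [cpow_def_of_ne_zero (mul_ne_zero hx hr0), cpow_def_of_ne_zero hx,
    cpow_def_of_ne_zero hr0, log_mul_ofReal r hr x hx, ← exp_add, ← ofReal_log hr.le, add_mul,
    add_comm]

theorem integral_one_sub_ofReal_cpow {a : ℂ} (ha : -1 < a.re) :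
    ∫ t in (0:ℝ)..1, ((1 - t : ℝ) : ℂ) ^ a = 1 / (a + 1) := by
  have ha1 : a + 1 ≠ 0 := fun h => by
    have := congrArg re h
    simp only [add_re, one_re, zero_re] at this
    linarith
  rw [intervalIntegral.integral_comp_sub_left (fun t : ℝ => (t : ℂ) ^ a),
    integral_cpow (Or.inl ha)]
  simp [zero_cpow ha1]

theorem inv_one_sub_re_pos {w : ℂ} (hw : ‖w‖ < 1) : 0 < ((1 - w)⁻¹).re := by
  have hw1 : 1 - w ≠ 0 := fun h => by simp [(sub_eq_zero.mp h).symm] at hw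
  rw [inv_re]
  refine div_pos ?_ (normSq_pos.mpr hw1)
  simpa using (re_le_norm w).trans_lt hw

end Complex

theorem cesaroStar_one_sub_cpow {a : ℂ} (ha : -1 < a.re) (z : ℂ) :
    cesaroStar (fun ξ => (1 - ξ) ^ a) z = (1 - z) ^ a / (a + 1) := by
  have hsplit : ∀ t ∈ Set.uIcc (0:ℝ) 1,
      (1 - (z + (t : ℂ) * (1 - z))) ^ a = (1 - z) ^ a * ((1 - t : ℝ) : ℂ) ^ a := by
    intro t ht
    rw [Set.uIcc_of_le zero_le_one] at ht
    rw [← Complex.mul_ofReal_cpow_of_nonneg _ (sub_nonneg.mpr ht.2)]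
    push_cast
    ring_nf
  rw [cesaroStar, intervalIntegral.integral_congr hsplit, intervalIntegral.integral_const_mul,
    Complex.integral_one_sub_ofReal_cpow ha, mul_one_div]

theorem cesaroStar_eigen_qw (w : ℂ) (hw : w ∈ ball (0 : ℂ) 1) :
    ∀ z ∈ ball (0 : ℂ) 1,
      cesaroStar (fun ξ => (1 - ξ) ^ (w / (1 - w))) z = (1 - w) * (1 - z) ^ (w / (1 - w)) := by
  intro z _
  rw [mem_ball_zero_iff] at hw
  have hw1 : 1 - w ≠ 0 := fun h => by simp [(sub_eq_zero.mp h).symm] at hw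
  have hexp : w / (1 - w) + 1 = (1 - w)⁻¹ := by field_simp; ring
  have hre : -1 < (w / (1 - w)).re := by
    have := Complex.inv_one_sub_re_pos hw
    rw [← hexp, add_re, one_re] at this
    linarith
  rw [cesaroStar_one_sub_cpow hre, hexp, div_inv_eq_mul, mul_comm]
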